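/- Let ρ be a critical radius function on ℝⁿ with constants C₀, N as in (2.1), and let {x_j} be a maximal set of points such that the balls B(x_j, ρ(x_j)/C') are pairwise disjoint for a suitable constant C' depending on C₀, N. Then the balls B_j := B(x_j, ρ(x_j)) cover ℝⁿ, and for every σ ≥ 1 there exist constants C, M > 0 (depending on C₀, N, n) such that ∑_j χ_{σ B_j}(x) ≤ C σ^M for every x ∈ ℝⁿ. -/

import Mathlib

/-!
Since the exponent N/(N+1) is at most 1, the upper critical-radius inequality gives
ρ(y) ≤ C₀(ρ(x) + |x - y|). With C' = 2C₀ + 1 this forbids a point y lying outside B_j when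
B(y, ρ(y)/C') meets B(x_j, ρ(x_j)/C'). For the overlap, if y ∈ σB_j then both inequalities
make ρ(x_j) comparable to ρ(y), up to powers of 1 + σ. Hence the disjoint balls
B(x_j, ρ(x_j)/C') each contain a ball of radius ≳ ρ(y)/σ and all lie in a ball of radius
≲ σ^(N+1) ρ(y) about y, and comparing Lebesgue measures bounds their number by (C σ^(N+2))^n.
-/

open Metric Set ENNReal

/-- A critical radius function on ℝⁿ. -/
def IsCriticalRadius {n : ℕ} (ρ : (Fin n → ℝ) → ℝ) : Prop :=
  (∀ x, 0 < ρ x) ∧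
  ∃ C : ℝ, 1 ≤ C ∧ ∃ N : ℝ, 0 < N ∧ ∀ x y : Fin n → ℝ,
    C⁻¹ * ρ x * (1 + dist x y / ρ x) ^ (-N) ≤ ρ y ∧
    ρ y ≤ C * ρ x * (1 + dist x y / ρ x) ^ (N / (N + 1))

open MeasureTheory Module

section SlowVariation

variable {X : Type*} [PseudoMetricSpace X] {ρ : X → ℝ} {C : ℝ}

theorem le_mul_add_dist_of_le_rpow {α : ℝ} {x y : X} (hx : 0 < ρ x) (hC : 0 ≤ C) (hα : α ≤ 1)
    (h : ρ y ≤ C * ρ x * (1 + dist x y / ρ x) ^ α) : ρ y ≤ C * (ρ x + dist x y) := by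
  have hbase : 1 ≤ 1 + dist x y / ρ x := le_add_of_nonneg_right (by positivity)
  calc ρ y ≤ C * ρ x * (1 + dist x y / ρ x) ^ α := h
    _ ≤ C * ρ x * (1 + dist x y / ρ x) ^ (1 : ℝ) := by gcongr
    _ = C * (ρ x + dist x y) := by
      rw [Real.rpow_one]
      field_simp

theorem le_mul_one_add_rpow_of_dist_le {N σ : ℝ} {x y : X} (hx : 0 < ρ x) (hC : 0 < C)
    (hN : 0 ≤ N) (h : C⁻¹ * ρ x * (1 + dist x y / ρ x) ^ (-N) ≤ ρ y)
    (hd : dist x y ≤ σ * ρ x) : ρ x ≤ C * (1 + σ) ^ N * ρ y := by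
  have hbase : 1 + dist x y / ρ x ≤ 1 + σ := by
    gcongr
    rwa [div_le_iff₀ hx]
  have hbase0 : 0 < 1 + dist x y / ρ x := by positivity
  have hpow : 0 < (1 + σ) ^ N := Real.rpow_pos_of_pos (hbase0.trans_le hbase) N
  have : C⁻¹ * ρ x * ((1 + σ) ^ N)⁻¹ ≤ ρ y := by
    calc C⁻¹ * ρ x * ((1 + σ) ^ N)⁻¹ = C⁻¹ * ρ x * (1 + σ) ^ (-N) := by
          rw [Real.rpow_neg (hbase0.le.trans hbase)]
      _ ≤ C⁻¹ * ρ x * (1 + dist x y / ρ x) ^ (-N) :=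
          mul_le_mul_of_nonneg_left
            (Real.rpow_le_rpow_of_nonpos hbase0 hbase (neg_nonpos.mpr hN)) (by positivity)
      _ ≤ ρ y := h
  calc ρ x = C * (1 + σ) ^ N * (C⁻¹ * ρ x * ((1 + σ) ^ N)⁻¹) := by field_simp
    _ ≤ C * (1 + σ) ^ N * ρ y := by gcongr

theorem div_le_of_mem_closedBall {σ : ℝ} {x p : X} (hC : 0 < C) (hσ : 0 ≤ σ)
    (hslow : ρ p ≤ C * (ρ x + dist x p)) (hp : p ∈ closedBall x (σ * ρ x)) :
    ρ p / (C * (1 + σ)) ≤ ρ x := by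
  rw [mem_closedBall, dist_comm] at hp
  rw [div_le_iff₀ (by positivity)]
  nlinarith

theorem iUnion_closedBall_eq_univ_of_not_disjoint {ι : Type*} {x : ι → X} (hC : 0 ≤ C)
    (hslow : ∀ x y, ρ y ≤ C * (ρ x + dist x y))
    (hmax : ∀ y, ∃ j, ¬ Disjoint (closedBall y (ρ y / (2 * C + 1)))
      (closedBall (x j) (ρ (x j) / (2 * C + 1)))) :
    ⋃ j, closedBall (x j) (ρ (x j)) = univ := by
  refine eq_univ_of_forall fun y => mem_iUnion.mpr ?_
  obtain ⟨j, hj⟩ := hmax y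
  obtain ⟨z, hzy, hzj⟩ := not_disjoint_iff.mp hj
  rw [mem_closedBall] at hzy hzj
  refine ⟨j, mem_closedBall.mpr (not_lt.mp fun hfar => ?_)⟩
  have hdist : dist y (x j) * (2 * C + 1) ≤ ρ y + ρ (x j) := by
    rw [← le_div_iff₀ (by positivity), add_div]
    exact (dist_triangle_left y (x j) z).trans (add_le_add hzy hzj)
  have hρy : ρ y ≤ C * (ρ (x j) + dist y (x j)) := dist_comm (x j) y ▸ hslow (x j) y
  nlinarith [mul_le_mul_of_nonneg_left hfar.le hC]

end SlowVariation

theorem tsum_indicator_one_le_of_pairwiseDisjoint_closedBall {E ι : Type*}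
    [NormedAddCommGroup E] [NormedSpace ℝ E] [MeasurableSpace E] [BorelSpace E]
    [FiniteDimensional ℝ E] (μ : Measure E) [μ.IsAddHaarMeasure] {J : Set ι} {x : ι → E}
    {p : E} {s R : ℝ} (hs : 0 < s) (hR : 0 ≤ R)
    (hdisj : J.PairwiseDisjoint fun j => closedBall (x j) s)
    (hsub : ∀ j ∈ J, closedBall (x j) s ⊆ closedBall p R) :
    ∑' j, J.indicator (fun _ => (1 : ℝ≥0∞)) j ≤ ENNReal.ofReal ((R / s) ^ finrank ℝ E) := by
  have hunit0 : μ (ball 0 1) ≠ 0 := (measure_ball_pos μ _ one_pos).ne'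
  have hunitT : μ (ball 0 1) ≠ ∞ := measure_ball_lt_top.ne
  have hvol : (∑' j, J.indicator (fun _ => (1 : ℝ≥0∞)) j) *
      (ENNReal.ofReal (s ^ finrank ℝ E) * μ (ball 0 1)) ≤
      ENNReal.ofReal (R ^ finrank ℝ E) * μ (ball 0 1) := by
    calc (∑' j, J.indicator (fun _ => (1 : ℝ≥0∞)) j) *
          (ENNReal.ofReal (s ^ finrank ℝ E) * μ (ball 0 1))
        = ∑' j : J, μ (closedBall (x j) s) := by
          simp_rw [Measure.addHaar_closedBall μ _ hs.le, ← ENNReal.tsum_mul_right,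
            tsum_subtype J fun _ => ENNReal.ofReal (s ^ finrank ℝ E) * μ (ball 0 1)]
          congr 1 with j
          by_cases hj : j ∈ J <;> simp [hj]
      _ ≤ μ (⋃ j : J, closedBall (x j) s) :=
          tsum_meas_le_meas_iUnion_of_disjoint μ (fun _ => measurableSet_closedBall)
            fun i j hij => hdisj i.2 j.2 (Subtype.coe_ne_coe.mpr hij)
      _ ≤ μ (closedBall p R) := measure_mono (iUnion_subset fun j => hsub j j.2)
      _ = ENNReal.ofReal (R ^ finrank ℝ E) * μ (ball 0 1) := Measure.addHaar_closedBall μ _ hR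
  have hs0 : ENNReal.ofReal (s ^ finrank ℝ E) ≠ 0 := by simp [hs]
  calc ∑' j, J.indicator (fun _ => (1 : ℝ≥0∞)) j
      ≤ ENNReal.ofReal (R ^ finrank ℝ E) * μ (ball 0 1) /
          (ENNReal.ofReal (s ^ finrank ℝ E) * μ (ball 0 1)) :=
        (ENNReal.le_div_iff_mul_le (Or.inl (mul_ne_zero hs0 hunit0))
          (Or.inl (mul_ne_top ofReal_ne_top hunitT))).mpr hvol
    _ = ENNReal.ofReal ((R / s) ^ finrank ℝ E) := by
        rw [ENNReal.mul_div_mul_right _ _ hunit0 hunitT, ← ENNReal.ofReal_div_of_pos (by positivity),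
          div_pow]

theorem tsum_indicator_closedBall_le {E ι : Type*} [NormedAddCommGroup E] [NormedSpace ℝ E]
    [FiniteDimensional ℝ E] {ρ : E → ℝ} {C C' N σ : ℝ} {x : ι → E}
    (hpos : ∀ y, 0 < ρ y) (hC : 0 < C) (hC' : 1 ≤ C') (hN : 0 ≤ N) (hσ : 0 ≤ σ)
    (hslow : ∀ x y, ρ y ≤ C * (ρ x + dist x y))
    (hlow : ∀ x y, C⁻¹ * ρ x * (1 + dist x y / ρ x) ^ (-N) ≤ ρ y)
    (hdisj : Pairwise fun i j =>
      Disjoint (closedBall (x i) (ρ (x i) / C')) (closedBall (x j) (ρ (x j) / C')))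
    (p : E) :
    ∑' j, indicator (closedBall (x j) (σ * ρ (x j))) (fun _ => (1 : ℝ≥0∞)) p ≤
      ENNReal.ofReal ((C ^ 2 * C' * (1 + σ) ^ 2 * (1 + σ) ^ N) ^ finrank ℝ E) := by
  borelize E
  set J := {j | p ∈ closedBall (x j) (σ * ρ (x j))}
  set s := ρ p / (C * (1 + σ)) / C'
  set R := (1 + σ) * (C * (1 + σ) ^ N * ρ p)
  have hinner : ∀ j ∈ J, closedBall (x j) s ⊆ closedBall (x j) (ρ (x j) / C') := fun j hj =>
    closedBall_subset_closedBall <|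
      div_le_div_of_nonneg_right (div_le_of_mem_closedBall hC hσ (hslow _ _) hj) (by linarith)
  have houter : ∀ j ∈ J, closedBall (x j) (ρ (x j) / C') ⊆ closedBall p R := by
    intro j hj z hz
    have hρj := le_mul_one_add_rpow_of_dist_le (hpos (x j)) hC hN (hlow (x j) p)
      (mem_closedBall'.mp hj)
    rw [mem_closedBall] at hz ⊢
    calc dist z p ≤ dist z (x j) + dist (x j) p := dist_triangle _ _ _
      _ ≤ ρ (x j) + σ * ρ (x j) :=
          add_le_add (hz.trans (div_le_self (hpos _).le hC')) (mem_closedBall'.mp hj)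
      _ = (1 + σ) * ρ (x j) := by ring
      _ ≤ (1 + σ) * (C * (1 + σ) ^ N * ρ p) := by gcongr
  have hcount := tsum_indicator_one_le_of_pairwiseDisjoint_closedBall (finBasis ℝ E).addHaar
    (J := J) (p := p) (s := s) (R := R) (by have := hpos p; positivity)
    (by have := hpos p; positivity)
    (fun i hi j hj hij => (hdisj hij).mono (hinner i hi) (hinner j hj))
    (fun j hj => (hinner j hj).trans (houter j hj))
  have hratio : R / s = C ^ 2 * C' * (1 + σ) ^ 2 * (1 + σ) ^ N := by
    have := hpos p
    simp only [R, s]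
    field_simp
  rw [← hratio]
  exact hcount

theorem one_add_sq_mul_rpow_le {σ N : ℝ} (hσ : 1 ≤ σ) (hN : 0 ≤ N) :
    (1 + σ) ^ 2 * (1 + σ) ^ N ≤ 4 * 2 ^ N * σ ^ (⌈N⌉₊ + 2) := by
  have h2σ : 1 + σ ≤ 2 * σ := by linarith
  have hsq : (1 + σ) ^ 2 ≤ 4 * σ ^ 2 := by nlinarith
  have hrpow : (1 + σ) ^ N ≤ 2 ^ N * σ ^ ⌈N⌉₊ := by
    calc (1 + σ) ^ N ≤ (2 * σ) ^ N := by gcongr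
      _ = 2 ^ N * σ ^ N := Real.mul_rpow zero_le_two (by linarith)
      _ ≤ 2 ^ N * σ ^ ⌈N⌉₊ := by
          rw [← Real.rpow_natCast σ]
          gcongr
          exact Nat.le_ceil N
  calc (1 + σ) ^ 2 * (1 + σ) ^ N ≤ 4 * σ ^ 2 * (2 ^ N * σ ^ ⌈N⌉₊) := by gcongr
    _ = 4 * 2 ^ N * σ ^ (⌈N⌉₊ + 2) := by ring

/-- The Dziubański–Zienkiewicz covering lemma: for a suitable constant C', any maximal
family of points x_j with the balls B(x_j, ρ(x_j)/C') pairwise disjoint yields critical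
balls B_j = B(x_j, ρ(x_j)) covering ℝⁿ with ∑_j χ_{σB_j} ≤ C σ^M for every σ ≥ 1. -/
theorem stmt18 {n : ℕ} (hn : 1 ≤ n) (ρ : (Fin n → ℝ) → ℝ) (hρ : IsCriticalRadius ρ) :
    ∃ C' > 0, ∀ x : ℕ → Fin n → ℝ,
      (Pairwise fun i j =>
        Disjoint (closedBall (x i) (ρ (x i) / C')) (closedBall (x j) (ρ (x j) / C'))) →
      (∀ y : Fin n → ℝ, ∃ j : ℕ,
        ¬ Disjoint (closedBall y (ρ y / C')) (closedBall (x j) (ρ (x j) / C'))) →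
      ((⋃ j : ℕ, closedBall (x j) (ρ (x j))) = univ) ∧
      ∀ σ : ℝ, 1 ≤ σ → ∃ C > 0, ∃ M > 0, ∀ pnt : Fin n → ℝ,
        (∑' j : ℕ, Set.indicator (closedBall (x j) (σ * ρ (x j))) (fun _ => (1:ℝ≥0∞)) pnt)
          ≤ ENNReal.ofReal (C * σ ^ M) := by
  obtain ⟨hpos, C₀, hC₀, N, hN, hineq⟩ := hρ
  have hC₀0 : 0 < C₀ := by linarith
  have hslow : ∀ x y, ρ y ≤ C₀ * (ρ x + dist x y) := fun x y =>
    le_mul_add_dist_of_le_rpow (hpos x) hC₀0.le (div_le_one_of_le₀ (by linarith) (by linarith))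
      (hineq x y).2
  refine ⟨2 * C₀ + 1, by positivity, fun x hdisj hmax =>
    ⟨iUnion_closedBall_eq_univ_of_not_disjoint hC₀0.le hslow hmax, fun σ hσ => ?_⟩⟩
  refine ⟨(C₀ ^ 2 * (2 * C₀ + 1) * (4 * 2 ^ N)) ^ n, by positivity, (⌈N⌉₊ + 2) * n,
    Nat.mul_pos (by omega) hn, fun p => ?_⟩
  refine (tsum_indicator_closedBall_le hpos hC₀0 (by linarith) hN.le (by linarith) hslow
    (fun x y => (hineq x y).1) hdisj p).trans (ENNReal.ofReal_le_ofReal ?_)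
  rw [finrank_fin_fun, pow_mul, ← mul_pow]
  gcongr ?_ ^ n
  have hK : 0 ≤ C₀ ^ 2 * (2 * C₀ + 1) := by positivity
  linarith [mul_le_mul_of_nonneg_left (one_add_sq_mul_rpow_le hσ hN.le) hK]
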